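/- If w₁, w₂ : 𝓗 → ℝ≥0 satisfy w₁(H) ≤ w₂(H₁) + ⋯ + w₂(Hₙ) for every H and every finite family H₁,…,Hₙ ⊆ H with ∪ᵢ Hᵢ = H, then there exists a subadditive function w̃ : 𝓗 → ℝ≥0 with w₁(H) ≤ w̃(H) ≤ w₂(H) for all H. -/
import Mathlib


open scoped NNReal

theorem stmt11 {α : Type*} [Fintype α] [DecidableEq α] (w₁ w₂ : Finset α → ℝ≥0)
    (h : ∀ H : Finset α, ∀ c : List (Finset α), c ≠ [] → (∀ A ∈ c, A ⊆ H) →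
      c.foldr (· ∪ ·) ∅ = H → w₁ H ≤ (c.map w₂).sum) :
    ∃ wt : Finset α → ℝ≥0,
      (∀ A B : Finset α, wt (A ∪ B) ≤ wt A + wt B) ∧
      (∀ H : Finset α, w₁ H ≤ wt H ∧ wt H ≤ w₂ H) := by
  classical
  set S : Finset α → Set ℝ≥0 := fun H =>
    {x | ∃ c : List (Finset α), c ≠ [] ∧ (∀ A ∈ c, A ⊆ H) ∧
      c.foldr (· ∪ ·) ∅ = H ∧ (c.map w₂).sum = x} with hS
  have hne : ∀ H, (S H).Nonempty := by
    intro H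
    exact ⟨w₂ H, [H], by simp, by simp, by simp, by simp⟩
  refine ⟨fun H => sInf (S H), ?_, ?_⟩
  · intro A B
    refine le_of_forall_pos_le_add ?_
    intro ε hε
    obtain ⟨x, hx, hxlt⟩ := exists_lt_of_csInf_lt (hne A)
      (lt_add_of_pos_right _ (half_pos hε))
    obtain ⟨y, hy, hylt⟩ := exists_lt_of_csInf_lt (hne B)
      (lt_add_of_pos_right _ (half_pos hε))
    obtain ⟨c₁, hc₁ne, hc₁sub, hc₁u, hc₁s⟩ := hx
    obtain ⟨c₂, hc₂ne, hc₂sub, hc₂u, hc₂s⟩ := hy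
    have hfold : ∀ (l : List (Finset α)) (X : Finset α),
        l.foldr (· ∪ ·) X = l.foldr (· ∪ ·) ∅ ∪ X := by
      intro l
      induction l with
      | nil => simp
      | cons a t ih => intro X; simp [ih X, Finset.union_assoc]
    have hmem : (c₁.map w₂).sum + (c₂.map w₂).sum ∈ S (A ∪ B) := by
      refine ⟨c₁ ++ c₂, by simp [hc₁ne], ?_, ?_, by simp⟩
      · intro C hC
        rcases List.mem_append.mp hC with h' | h'
        · exact (hc₁sub C h').trans Finset.subset_union_left
        · exact (hc₂sub C h').trans Finset.subset_union_right
      · rw [List.foldr_append, hfold, hc₂u, hc₁u]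
    calc sInf (S (A ∪ B)) ≤ (c₁.map w₂).sum + (c₂.map w₂).sum :=
          csInf_le (OrderBot.bddBelow _) hmem
      _ = x + y := by rw [hc₁s, hc₂s]
      _ ≤ (sInf (S A) + ε / 2) + (sInf (S B) + ε / 2) :=
          add_le_add hxlt.le hylt.le
      _ = sInf (S A) + sInf (S B) + ε := by rw [add_add_add_comm, add_halves]
  · intro H
    constructor
    · refine le_csInf (hne H) ?_
      rintro x ⟨c, hcne, hcsub, hcu, hcs⟩
      rw [← hcs]
      exact h H c hcne hcsub hcu
    · exact csInf_le (OrderBot.bddBelow _) ⟨[H], by simp, by simp, by simp, by simp⟩
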